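/- arXiv:2603.03601 — 3 statements merged into one kernel-verified Lean document; each statement's English description precedes it below -/
import Mathlib

section
/- A controllable graph has trivial automorphism group: if P is a permutation matrix with P·A·Pᵀ = A, where A is the adjacency matrix of a controllable graph, then P is the identity matrix. -/
open Matrix

/-- The walk matrix of a graph with adjacency matrix `A`: its `j`-th column is `A^j • 1`. -/
def walkMatrix {n : ℕ} (A : Matrix (Fin n) (Fin n) ℝ) : Matrix (Fin n) (Fin n) ℝ :=
  Matrix.of fun i j => (A ^ (j : ℕ) *ᵥ fun _ => (1 : ℝ)) i

/-- A permutation matrix. -/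
def IsPermMatrix {n : ℕ} (P : Matrix (Fin n) (Fin n) ℝ) : Prop :=
  ∃ σ : Equiv.Perm (Fin n), P = σ.permMatrix ℝ

/-- A controllable graph has trivial automorphism group: if `P A Pᵀ = A` for a permutation
matrix `P` and `A` the adjacency matrix of a controllable graph, then `P = 1`. -/
theorem stmt_2 {n : ℕ} (A P : Matrix (Fin n) (Fin n) ℝ)
    (hsymm : A.IsSymm) (h01 : ∀ i j, A i j = 0 ∨ A i j = 1) (hdiag : ∀ i, A i i = 0)
    (hcontrol : IsUnit (walkMatrix A))
    (hP : IsPermMatrix P) (hPA : P * A * Pᵀ = A) :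
    P = 1 := by
  obtain ⟨σ, rfl⟩ := hP
  -- Pᵀ * P = 1
  have hPtP : (σ.permMatrix ℝ)ᵀ * σ.permMatrix ℝ = 1 := by
    rw [Equiv.Perm.permMatrix, ← PEquiv.toMatrix_symm, ← PEquiv.toMatrix_trans,
      ← Equiv.toPEquiv_symm, ← Equiv.toPEquiv_trans]
    simp
  have hcomm : σ.permMatrix ℝ * A = A * σ.permMatrix ℝ := by
    calc σ.permMatrix ℝ * A = σ.permMatrix ℝ * A * ((σ.permMatrix ℝ)ᵀ * σ.permMatrix ℝ) := by
          rw [hPtP, mul_one]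
      _ = (σ.permMatrix ℝ * A * (σ.permMatrix ℝ)ᵀ) * σ.permMatrix ℝ := by rw [mul_assoc (σ.permMatrix ℝ * A)]
      _ = A * σ.permMatrix ℝ := by rw [hPA]
  have hcommpow : ∀ k : ℕ, σ.permMatrix ℝ * A ^ k = A ^ k * σ.permMatrix ℝ := by
    intro k
    induction k with
    | zero => simp
    | succ k ih =>
      rw [pow_succ, ← mul_assoc, ih, mul_assoc, hcomm, ← mul_assoc]
  have hones : (σ.permMatrix ℝ) *ᵥ (fun _ => (1:ℝ)) = fun _ => (1:ℝ) := by
    funext i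
    simp [mulVec, dotProduct, Equiv.Perm.permMatrix, PEquiv.toMatrix_apply,
      Equiv.toPEquiv_apply]
  have hPW : σ.permMatrix ℝ * walkMatrix A = walkMatrix A := by
    ext i j
    have : (σ.permMatrix ℝ * walkMatrix A) i j
        = ((σ.permMatrix ℝ * A ^ (j:ℕ)) *ᵥ fun _ => (1:ℝ)) i := by
      simp only [walkMatrix, mul_apply, mulVec, dotProduct, Matrix.of_apply, Finset.mul_sum]
      rw [Finset.sum_comm]
      simp
    rw [this, hcommpow, ← mulVec_mulVec, hones]
    rfl
  have hdet : IsUnit (walkMatrix A).det := (isUnit_iff_isUnit_det _).mp hcontrol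
  calc σ.permMatrix ℝ = σ.permMatrix ℝ * (walkMatrix A * (walkMatrix A)⁻¹) := by
        rw [mul_nonsing_inv _ hdet, mul_one]
    _ = (σ.permMatrix ℝ * walkMatrix A) * (walkMatrix A)⁻¹ := by rw [mul_assoc]
    _ = walkMatrix A * (walkMatrix A)⁻¹ := by rw [hPW]
    _ = 1 := mul_nonsing_inv _ hdet
end

section
/- If A and B are adjacency matrices of two graphs and there exists a doubly stochastic matrix S with SA = BS, then the two graphs have the same number of walks of every length: 1ᵀ A^i 1 = 1ᵀ B^i 1 for all i ≥ 0. -/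
open Matrix

/-- If `A`, `B` are adjacency matrices and `S A = B S` for a doubly stochastic matrix `S`,
then the two graphs have the same number of walks of every length:
`1ᵀ A^i 1 = 1ᵀ B^i 1` for all `i ≥ 0`. -/
theorem stmt_3 {n : ℕ} (A B S : Matrix (Fin n) (Fin n) ℝ)
    (hAsymm : A.IsSymm) (hA01 : ∀ i j, A i j = 0 ∨ A i j = 1)
    (hBsymm : B.IsSymm) (hB01 : ∀ i j, B i j = 0 ∨ B i j = 1)
    (hS : S ∈ doublyStochastic ℝ (Fin n)) (hSA : S * A = B * S) :
    ∀ i : ℕ, (fun _ => (1 : ℝ)) ⬝ᵥ (A ^ i *ᵥ fun _ => (1 : ℝ)) =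
      (fun _ => (1 : ℝ)) ⬝ᵥ (B ^ i *ᵥ fun _ => (1 : ℝ)) := by
  have key : ∀ i : ℕ, S * A ^ i = B ^ i * S := by
    intro i
    induction i with
    | zero => simp
    | succ k ih =>
      rw [pow_succ, pow_succ, ← mul_assoc, ih, mul_assoc, hSA, ← mul_assoc]
  intro i
  have h1 : ((fun _ => (1 : ℝ)) : Fin n → ℝ) = (1 : Fin n → ℝ) := rfl
  rw [h1]
  have hrow : (1 : Fin n → ℝ) ᵥ* S = 1 := (mem_doublyStochastic.1 hS).2.2
  have hcol : S *ᵥ (1 : Fin n → ℝ) = 1 := (mem_doublyStochastic.1 hS).2.1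
  calc (1 : Fin n → ℝ) ⬝ᵥ (A ^ i *ᵥ 1)
      = ((1 : Fin n → ℝ) ᵥ* S) ⬝ᵥ (A ^ i *ᵥ 1) := by rw [hrow]
    _ = (1 : Fin n → ℝ) ⬝ᵥ ((S * A ^ i) *ᵥ 1) := by
        rw [← dotProduct_mulVec, ← mulVec_mulVec]
    _ = (1 : Fin n → ℝ) ⬝ᵥ ((B ^ i * S) *ᵥ 1) := by rw [key]
    _ = (1 : Fin n → ℝ) ⬝ᵥ (B ^ i *ᵥ 1) := by rw [← mulVec_mulVec, hcol]
end

section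
/- Let Γ be a connected bipartite (k,ℓ)-semiregular graph and Δ a connected bipartite (k̄,ℓ̄)-semiregular graph. If Γ and Δ are cospectral (same adjacency spectrum with multiplicities) and (k,ℓ) ≠ (k̄,ℓ̄), then k = ℓ̄ and ℓ = k̄. -/
/-!
Cospectral graphs have the same number `n` of vertices (the degree of the characteristic
polynomial), the same number `e` of edges (`2e = tr A² = ∑ μ²`) and the same largest eigenvalue.
For a `(k,ℓ)`-semiregular bipartite graph with an edge, the largest eigenvalue is `√(kℓ)`: the
vector equal to `√k` on one side and `√ℓ` on the other is a positive eigenvector for it, and a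
positive eigenvector of a nonnegative symmetric matrix carries the spectral radius. Double
counting gives `(k + ℓ) e = k ℓ n`, so both `k + ℓ` and `k ℓ` are spectral invariants and
`{k, ℓ} = {k̄, ℓ̄}` as the roots of one quadratic. A graph without edges has `k = ℓ = 0`.
-/

open Matrix Polynomial Finset

lemma Nat.eq_and_eq_or_eq_and_eq_of_add_eq_of_mul_eq {a b c d : ℕ} (hs : a + b = c + d)
    (hp : a * b = c * d) : a = c ∧ b = d ∨ a = d ∧ b = c := by
  zify at hs hp
  have h : ((a : ℤ) - c) * (a - d) = 0 := by linear_combination (a : ℤ) * hs - hp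
  rcases _root_.mul_eq_zero.mp h with h | h
  · left; omega
  · right; omega

namespace Matrix

variable {n : Type*} [Fintype n]

lemma isRoot_charpoly_iff_exists_mulVec_eq_smul [DecidableEq n] {K : Type*} [Field K]
    (A : Matrix n n K) (μ : K) : A.charpoly.IsRoot μ ↔ ∃ v ≠ 0, A *ᵥ v = μ • v := by
  rw [IsRoot.def, eval_charpoly, ← exists_mulVec_eq_zero_iff]
  simp only [sub_mulVec, sub_eq_zero, scalar_apply, ← smul_one_eq_diagonal, smul_mulVec,
    one_mulVec, eq_comm]

/-- Pair the entrywise bound `|μ| |y| ≤ A |y|` with the positive left eigenvector `x`. -/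
lemma abs_le_of_vecMul_eq_smul {A : Matrix n n ℝ} (hA : ∀ i j, 0 ≤ A i j)
    {x : n → ℝ} (hx : ∀ i, 0 < x i) {c : ℝ} (hxA : x ᵥ* A = c • x)
    {μ : ℝ} {y : n → ℝ} (hy : y ≠ 0) (hAy : A *ᵥ y = μ • y) : |μ| ≤ c := by
  set z : n → ℝ := fun i => |y i|
  have hz : ∀ i, |μ| * z i ≤ (A *ᵥ z) i := fun i => by
    calc |μ| * z i = |(A *ᵥ y) i| := by simp [hAy, z, abs_mul]
      _ ≤ ∑ j, |A i j * y j| := abs_sum_le_sum_abs _ _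
      _ = (A *ᵥ z) i := by simp [mulVec, dotProduct, abs_mul, abs_of_nonneg (hA i _), z]
  have hxz : 0 < x ⬝ᵥ z := by
    obtain ⟨i, hi⟩ := Function.ne_iff.mp hy
    exact sum_pos' (fun j _ => mul_nonneg (hx j).le (abs_nonneg _))
      ⟨i, mem_univ _, mul_pos (hx i) (abs_pos.mpr hi)⟩
  have : |μ| * (x ⬝ᵥ z) ≤ c * (x ⬝ᵥ z) :=
    calc |μ| * (x ⬝ᵥ z) = x ⬝ᵥ (|μ| • z) := by rw [dotProduct_smul, smul_eq_mul]
      _ ≤ x ⬝ᵥ (A *ᵥ z) :=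
        dotProduct_le_dotProduct_of_nonneg_left (fun i => by simpa using hz i) fun i => (hx i).le
      _ = c * (x ⬝ᵥ z) := by rw [dotProduct_mulVec, hxA, smul_dotProduct, smul_eq_mul]
  exact le_of_mul_le_mul_right this hxz

lemma IsHermitian.trace_sq_eq_sum_roots_charpoly [DecidableEq n] {𝕜 : Type*} [RCLike 𝕜]
    {A : Matrix n n 𝕜} (hA : A.IsHermitian) :
    (A ^ 2).trace = (A.charpoly.roots.map (· ^ 2)).sum := by
  have hsq : A ^ 2 = cfc (· ^ 2 : ℝ → ℝ) A := (cfc_pow_id A 2 hA.isSelfAdjoint).symm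
  rw [trace_eq_sum_roots_charpoly_of_splits (hA.pow 2).splits_charpoly, hsq,
    hA.charpoly_cfc_eq, hA.roots_charpoly_eq_eigenvalues,
    roots_prod _ _ (prod_ne_zero_iff.mpr fun i _ => X_sub_C_ne_zero _)]
  simp only [roots_X_sub_C, Multiset.bind_singleton, Multiset.map_map]
  simp [Function.comp_def]

end Matrix

namespace SimpleGraph

variable {V : Type*} [Fintype V] (G : SimpleGraph V) [DecidableRel G.Adj]

lemma trace_adjMatrix_sq {α : Type*} [Semiring α] [DecidableEq V] :
    (G.adjMatrix α ^ 2).trace = 2 * #G.edgeFinset := by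
  simp only [sq, trace, diag_apply, adjMatrix_mul_self_apply_self]
  rw [← Nat.cast_ofNat, ← Nat.cast_mul, ← sum_degrees_eq_twice_card_edges, Nat.cast_sum]

structure IsSemiregularBipartition (X : Set V) (k ℓ : ℕ) : Prop where
  mem_iff_notMem_of_adj : ∀ u v, G.Adj u v → (u ∈ X ↔ v ∉ X)
  degree_of_mem : ∀ v ∈ X, G.degree v = k
  degree_of_notMem : ∀ v, v ∉ X → G.degree v = ℓ

namespace IsSemiregularBipartition

variable {G} {X : Set V} {k ℓ : ℕ} {u v : V}

lemma notMem_of_adj_of_mem (h : G.IsSemiregularBipartition X k ℓ) (huv : G.Adj u v)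
    (hu : u ∈ X) : v ∉ X :=
  (h.mem_iff_notMem_of_adj u v huv).mp hu

lemma mem_of_adj_of_notMem (h : G.IsSemiregularBipartition X k ℓ) (huv : G.Adj u v)
    (hu : u ∉ X) : v ∈ X :=
  not_not.mp ((h.mem_iff_notMem_of_adj u v huv).not.mp hu)

lemma compl (h : G.IsSemiregularBipartition X k ℓ) : G.IsSemiregularBipartition Xᶜ ℓ k where
  mem_iff_notMem_of_adj _ _ huv :=
    ⟨fun hu => not_not.mpr (h.mem_of_adj_of_notMem huv hu),
      fun hv => h.notMem_of_adj_of_mem huv.symm (not_not.mp hv)⟩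
  degree_of_mem v hv := h.degree_of_notMem v hv
  degree_of_notMem v hv := h.degree_of_mem v (not_not.mp hv)

lemma mul_ncard_eq_card_edgeFinset (h : G.IsSemiregularBipartition X k ℓ) :
    k * X.ncard = #G.edgeFinset := by
  classical
  have hbip : G.IsBipartiteWith ↑X.toFinset ↑Xᶜ.toFinset :=
    { disjoint := by simpa using disjoint_compl_right
      mem_of_adj := fun u v huv => by
        by_cases hu : u ∈ X
        · simp [hu, h.notMem_of_adj_of_mem huv hu]
        · simp [hu, h.mem_of_adj_of_notMem huv hu] }
  rw [← isBipartiteWith_sum_degrees_eq_card_edges hbip,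
    sum_congr rfl fun v hv => h.degree_of_mem v (Set.mem_toFinset.mp hv), sum_const,
    smul_eq_mul, mul_comm, Set.ncard_eq_toFinset_card']

lemma exists_pos_mulVec_eq_smul (h : G.IsSemiregularBipartition X k ℓ) (hk : 0 < k)
    (hℓ : 0 < ℓ) : ∃ x : V → ℝ, (∀ v, 0 < x v) ∧ G.adjMatrix ℝ *ᵥ x = √(k * ℓ) • x := by
  classical
  refine ⟨fun v => if v ∈ X then √k else √ℓ, fun v => by dsimp only; split_ifs <;> positivity,
    ?_⟩
  ext u
  rw [adjMatrix_mulVec_apply, Pi.smul_apply, smul_eq_mul, Real.sqrt_mul (Nat.cast_nonneg k)]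
  by_cases hu : u ∈ X
  · rw [sum_congr rfl fun v hv =>
        if_neg (h.notMem_of_adj_of_mem ((G.mem_neighborFinset u v).mp hv) hu),
      sum_const, card_neighborFinset_eq_degree, h.degree_of_mem u hu, if_pos hu, nsmul_eq_mul,
      mul_right_comm, Real.mul_self_sqrt (Nat.cast_nonneg _)]
  · rw [sum_congr rfl fun v hv =>
        if_pos (h.mem_of_adj_of_notMem ((G.mem_neighborFinset u v).mp hv) hu),
      sum_const, card_neighborFinset_eq_degree, h.degree_of_notMem u hu, if_neg hu, nsmul_eq_mul,
      mul_assoc, Real.mul_self_sqrt (Nat.cast_nonneg _), mul_comm]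

lemma add_mul_card_edgeFinset (h : G.IsSemiregularBipartition X k ℓ) :
    (k + ℓ) * #G.edgeFinset = k * ℓ * Fintype.card V := by
  rw [← Nat.card_eq_fintype_card, ← Set.ncard_add_ncard_compl X]
  calc (k + ℓ) * #G.edgeFinset
      = k * (ℓ * Xᶜ.ncard) + ℓ * (k * X.ncard) := by
        rw [h.mul_ncard_eq_card_edgeFinset, h.compl.mul_ncard_eq_card_edgeFinset, add_mul]
    _ = k * ℓ * (X.ncard + Xᶜ.ncard) := by ring

lemma card_edgeFinset_pos_iff (h : G.IsSemiregularBipartition X k ℓ) (hX : X.Nonempty) :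
    0 < #G.edgeFinset ↔ 0 < k := by
  rw [← h.mul_ncard_eq_card_edgeFinset,
    Nat.mul_pos_iff_of_pos_right ((Set.ncard_pos X.toFinite).mpr hX)]

lemma isGreatest_roots_charpoly [DecidableEq V] [Nonempty V]
    (h : G.IsSemiregularBipartition X k ℓ) (hk : 0 < k) (hℓ : 0 < ℓ) :
    IsGreatest {μ | (G.adjMatrix ℝ).charpoly.IsRoot μ} √(k * ℓ) := by
  obtain ⟨x, hx, hAx⟩ := h.exists_pos_mulVec_eq_smul hk hℓ
  have hxA : x ᵥ* G.adjMatrix ℝ = √(k * ℓ) • x := by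
    rw [← hAx, ← vecMul_transpose, transpose_adjMatrix]
  refine ⟨(isRoot_charpoly_iff_exists_mulVec_eq_smul _ _).mpr
    ⟨x, fun hx0 => (hx (Classical.arbitrary V)).ne' (congrFun hx0 _), hAx⟩, fun μ hμ => ?_⟩
  obtain ⟨y, hy, hAy⟩ := (isRoot_charpoly_iff_exists_mulVec_eq_smul _ _).mp hμ
  have hA : ∀ i j, 0 ≤ G.adjMatrix ℝ i j := fun i j => by
    rw [adjMatrix_apply]; split_ifs <;> norm_num
  exact (le_abs_self μ).trans (abs_le_of_vecMul_eq_smul hA hx hxA hy hAy)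

end IsSemiregularBipartition

lemma card_edgeFinset_eq_of_charpoly_eq {W : Type*} [Fintype W] [DecidableEq V] [DecidableEq W]
    {H : SimpleGraph W} [DecidableRel H.Adj]
    (hGH : (G.adjMatrix ℝ).charpoly = (H.adjMatrix ℝ).charpoly) :
    #G.edgeFinset = #H.edgeFinset := by
  have := congrArg (fun p : ℝ[X] => (p.roots.map (· ^ 2)).sum) hGH
  simp only [← (G.isHermitian_adjMatrix ℝ).trace_sq_eq_sum_roots_charpoly,
    ← (H.isHermitian_adjMatrix ℝ).trace_sq_eq_sum_roots_charpoly, trace_adjMatrix_sq] at this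
  have : 2 * #G.edgeFinset = 2 * #H.edgeFinset := by exact_mod_cast this
  omega

end SimpleGraph

theorem stmt_10_general {V W : Type} [Fintype V] [DecidableEq V] [Fintype W] [DecidableEq W]
    (G : SimpleGraph V) [DecidableRel G.Adj] (H : SimpleGraph W) [DecidableRel H.Adj]
    (X' : Set V) (Y' : Set W)
    (hX : X'.Nonempty) (hXc : X'ᶜ.Nonempty) (hY : Y'.Nonempty) (hYc : Y'ᶜ.Nonempty)
    (hbipG : ∀ u v, G.Adj u v → (u ∈ X' ↔ v ∉ X'))
    (hbipH : ∀ u v, H.Adj u v → (u ∈ Y' ↔ v ∉ Y'))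
    (k ℓ kb ℓb : ℕ)
    (hk : ∀ v ∈ X', G.degree v = k) (hl : ∀ v, v ∉ X' → G.degree v = ℓ)
    (hkb : ∀ v ∈ Y', H.degree v = kb) (hlb : ∀ v, v ∉ Y' → H.degree v = ℓb)
    (hcospec : (G.adjMatrix ℝ).charpoly = (H.adjMatrix ℝ).charpoly)
    (hne : (k, ℓ) ≠ (kb, ℓb)) :
    k = ℓb ∧ ℓ = kb := by
  have hG : G.IsSemiregularBipartition X' k ℓ := ⟨hbipG, hk, hl⟩
  have hH : H.IsSemiregularBipartition Y' kb ℓb := ⟨hbipH, hkb, hlb⟩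
  have hV : Fintype.card V = Fintype.card W := by
    rw [← charpoly_natDegree_eq_dim (G.adjMatrix ℝ), hcospec, charpoly_natDegree_eq_dim]
  have hE := G.card_edgeFinset_eq_of_charpoly_eq hcospec
  rcases Nat.eq_zero_or_pos #G.edgeFinset with he | he
  · have hzero {a : ℕ} (ha : 0 < #G.edgeFinset ↔ 0 < a) : a = 0 := by omega
    obtain ⟨rfl, rfl, rfl, rfl⟩ : k = 0 ∧ ℓ = 0 ∧ kb = 0 ∧ ℓb = 0 :=
      ⟨hzero (hG.card_edgeFinset_pos_iff hX), hzero (hG.compl.card_edgeFinset_pos_iff hXc),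
        hzero (hE ▸ hH.card_edgeFinset_pos_iff hY),
        hzero (hE ▸ hH.compl.card_edgeFinset_pos_iff hYc)⟩
    exact absurd rfl hne
  have hkℓ : k * ℓ = kb * ℓb := by
    have : Nonempty V := ⟨hX.some⟩
    have : Nonempty W := ⟨hY.some⟩
    have hGtop := hG.isGreatest_roots_charpoly ((hG.card_edgeFinset_pos_iff hX).mp he)
      ((hG.compl.card_edgeFinset_pos_iff hXc).mp he)
    have hHtop := hH.isGreatest_roots_charpoly ((hH.card_edgeFinset_pos_iff hY).mp (hE ▸ he))
      ((hH.compl.card_edgeFinset_pos_iff hYc).mp (hE ▸ he))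
    rw [← hcospec] at hHtop
    exact_mod_cast (Real.sqrt_inj (by positivity) (by positivity)).mp (hGtop.unique hHtop)
  have hsum : k + ℓ = kb + ℓb := by
    refine Nat.eq_of_mul_eq_mul_right he ?_
    rw [hG.add_mul_card_edgeFinset, hE, hH.add_mul_card_edgeFinset, hkℓ, hV]
  rcases Nat.eq_and_eq_or_eq_and_eq_of_add_eq_of_mul_eq hsum hkℓ with ⟨rfl, rfl⟩ | hswap
  · exact absurd rfl hne
  · exact hswap

/-- If `Γ` is a connected bipartite `(k,ℓ)`-semiregular graph and `Δ` a connected bipartite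
`(k̄,ℓ̄)`-semiregular graph (with both parts nonempty), `Γ` and `Δ` are cospectral, and
`(k,ℓ) ≠ (k̄,ℓ̄)`, then `k = ℓ̄` and `ℓ = k̄`. -/
theorem stmt_10 {V W : Type} [Fintype V] [DecidableEq V] [Fintype W] [DecidableEq W]
    (G : SimpleGraph V) [DecidableRel G.Adj] (H : SimpleGraph W) [DecidableRel H.Adj]
    (hGconn : G.Connected) (hHconn : H.Connected)
    (X' : Set V) (Y' : Set W)
    (hX : X'.Nonempty) (hXc : X'ᶜ.Nonempty) (hY : Y'.Nonempty) (hYc : Y'ᶜ.Nonempty)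
    (hbipG : ∀ u v, G.Adj u v → (u ∈ X' ↔ v ∉ X'))
    (hbipH : ∀ u v, H.Adj u v → (u ∈ Y' ↔ v ∉ Y'))
    (k ℓ kb ℓb : ℕ)
    (hk : ∀ v ∈ X', G.degree v = k) (hl : ∀ v, v ∉ X' → G.degree v = ℓ)
    (hkb : ∀ v ∈ Y', H.degree v = kb) (hlb : ∀ v, v ∉ Y' → H.degree v = ℓb)
    (hcospec : (G.adjMatrix ℝ).charpoly = (H.adjMatrix ℝ).charpoly)
    (hne : (k, ℓ) ≠ (kb, ℓb)) :
    k = ℓb ∧ ℓ = kb :=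
  stmt_10_general G H X' Y' hX hXc hY hYc hbipG hbipH k ℓ kb ℓb hk hl hkb hlb hcospec hne
end
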